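/- A 3CM M halts if and only if the set G = {gᵏ(2) : k ∈ ℕ} is bounded (equivalently, finite). -/

import Mathlib

set_option maxHeartbeats 1000000
set_option synthInstance.maxHeartbeats 1000000
set_option synthInstance.maxSize 512

attribute [local instance] Classical.propDecidable

noncomputable section

/-! ### Terms and atoms -/

/-- Variables: ordinary variables `Sum.inl n`, or fresh variables `Sum.inr (c, k)`
introduced by the trigger with code `c` for the head variable with code `k`. -/
abbrev Var : Type := ℕ ⊕ (ℕ × ℕ)

/-- Terms: constants `Sum.inl c` or variables `Sum.inr v`. -/
abbrev FTerm : Type := ℕ ⊕ Var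

def ct (n : ℕ) : FTerm := Sum.inl n
def vt (n : ℕ) : FTerm := Sum.inr (Sum.inl n)

/-- An atom: a predicate name together with its list of arguments. -/
abbrev Atom : Type := ℕ × List FTerm

/-- Active domain: all terms occurring in an atom set. -/
def adom (J : Set Atom) : Set FTerm := {t | ∃ a ∈ J, t ∈ a.2}

def atomVarsF (a : Atom) : Finset Var := (a.2.filterMap Sum.getRight?).toFinset

def varsF (A : Finset Atom) : Finset Var := A.biUnion atomVarsF

def setVars (J : Set Atom) : Set Var := {v | ∃ a ∈ J, Sum.inr v ∈ a.2}

/-! ### Substitutions and homomorphisms -/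

abbrev Subst := Var → FTerm

def applyT (σ : Subst) : FTerm → FTerm
  | Sum.inl c => Sum.inl c
  | Sum.inr v => σ v

def applyA (σ : Subst) (a : Atom) : Atom := (a.1, a.2.map (applyT σ))

def IsHomOn (σ : Subst) (A B : Set Atom) : Prop := ∀ a ∈ A, applyA σ a ∈ B

def HomBetween (A B : Set Atom) : Prop := ∃ σ : Subst, IsHomOn σ A B

def IsRetraction (σ : Subst) (A B : Set Atom) : Prop :=
  IsHomOn σ A B ∧ ∀ v ∈ setVars A ∩ setVars B, σ v = Sum.inr v

/-- Isomorphism of atom sets: a pair of mutually inverse homomorphisms. -/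
def Isomorphic (A B : Set Atom) : Prop :=
  ∃ σ τ : Subst, IsHomOn σ A B ∧ IsHomOn τ B A ∧
    (∀ a ∈ A, applyA τ (applyA σ a) = a) ∧ (∀ b ∈ B, applyA σ (applyA τ b) = b)

/-! ### Rules -/

/-- A rule is a pair (body, head). Its existential variables are the head variables
not occurring in the body; its frontier the variables shared by body and head.
A rule is Datalog when every head variable occurs in the body. -/
abbrev Rule : Type := Finset Atom × Finset Atom

def frontierOf (R : Rule) : Finset Var := varsF R.1 ∩ varsF R.2

def DatRules (Rset : Finset Rule) : Finset Rule := Rset.filter fun R => varsF R.2 ⊆ varsF R.1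
def NDatRules (Rset : Finset Rule) : Finset Rule := Rset.filter fun R => ¬ varsF R.2 ⊆ varsF R.1

/-- Satisfaction of a rule in an atom set. -/
def SatisfiesRule (J : Set Atom) (R : Rule) : Prop :=
  ∀ σ : Subst, IsHomOn σ (R.1 : Set Atom) J →
    ∃ σ' : Subst, (∀ v ∈ varsF R.1, σ' v = σ v) ∧ IsHomOn σ' (R.2 : Set Atom) J

def IsModel (Rset : Finset Rule) (I J : Set Atom) : Prop :=
  (∀ R ∈ Rset, SatisfiesRule J R) ∧ HomBetween I J

/-- BCQ entailment: every model of the KB satisfies the query. -/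
def Entails (Rset : Finset Rule) (I q : Set Atom) : Prop :=
  ∀ J : Set Atom, IsModel Rset I J → HomBetween q J

def IsUniversalModel (Rset : Finset Rule) (I U : Set Atom) : Prop :=
  IsModel Rset I U ∧ ∀ J : Set Atom, IsModel Rset I J → HomBetween U J

/-! ### Triggers -/

structure Trigger where
  rule : Rule
  sub : Subst

/-- Injective code of a trigger (a trigger is determined by its rule and the
restriction of its substitution to the body variables). -/
def Trigger.code (t : Trigger) : ℕ :=
  Encodable.encode (t.rule, (varsF t.rule.1).image fun v => (v, t.sub v))

/-- The canonical extension of the trigger substitution, mapping each existential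
variable `z` to the fresh variable unique for `z` and the trigger. -/
def Trigger.extSub (t : Trigger) : Subst := fun v =>
  if v ∈ varsF t.rule.1 then t.sub v
  else Sum.inr (Sum.inr (t.code, Encodable.encode v))

def Trigger.out (t : Trigger) : Finset Atom := t.rule.2.image (applyA t.extSub)

def Trigger.isOn (t : Trigger) (J : Set Atom) : Prop := IsHomOn t.sub (t.rule.1 : Set Atom) J

/-! ### Chase variants, derivations, chase termination classes -/

inductive ChaseVariant : Type
  | O | SO | R | E
deriving DecidableEq

def Applicable : ChaseVariant → Trigger → Set Atom → Prop
  | .O, t, J => ¬ ((t.out : Set Atom) ⊆ J)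
  | .SO, t, J => ∀ t' : Trigger, t'.rule = t.rule → t'.isOn J →
      (∀ v ∈ frontierOf t.rule, t'.sub v = t.sub v) → ¬ ((t'.out : Set Atom) ⊆ J)
  | .R, t, J => ¬ ∃ σ : Subst, IsRetraction σ (J ∪ (t.out : Set Atom)) J
  | .E, t, J => ¬ ∃ σ : Subst, IsHomOn σ (J ∪ (t.out : Set Atom)) J

def instSeq (I : Set Atom) (steps : ℕ → Option Trigger) : ℕ → Set Atom
  | 0 => I
  | n + 1 => instSeq I steps n ∪
      (match steps n with
        | none => (∅ : Set Atom)
        | some t => (t.out : Set Atom))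

/-- A (possibly infinite) derivation from the knowledge base `⟨Rset, I⟩`. -/
structure Deriv (Rset : Finset Rule) (I : Set Atom) where
  steps : ℕ → Option Trigger
  prefix_closed : ∀ n, steps n = none → steps (n + 1) = none
  valid : ∀ n t, steps n = some t →
    t.rule ∈ Rset ∧ t.isOn (instSeq I steps n) ∧ ¬ ((t.out : Set Atom) ⊆ instSeq I steps n)

def Deriv.inst {Rset : Finset Rule} {I : Set Atom} (D : Deriv Rset I) (n : ℕ) :
    Set Atom := instSeq I D.steps n

def Deriv.res {Rset : Finset Rule} {I : Set Atom} (D : Deriv Rset I) : Set Atom :=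
  ⋃ n, D.inst n

def Deriv.Finite {Rset : Finset Rule} {I : Set Atom} (D : Deriv Rset I) : Prop :=
  ∃ n, D.steps n = none

def Deriv.IsX {Rset : Finset Rule} {I : Set Atom} (X : ChaseVariant)
    (D : Deriv Rset I) : Prop :=
  ∀ n t, D.steps n = some t → Applicable X t (D.inst n)

def Deriv.Fair {Rset : Finset Rule} {I : Set Atom} (X : ChaseVariant)
    (D : Deriv Rset I) : Prop :=
  ∀ i, ∀ t : Trigger, t.rule ∈ Rset → t.isOn (D.inst i) → Applicable X t (D.inst i) →
    ∃ j, i < j ∧ ¬ Applicable X t (D.inst j)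

/-- All-instance, all-derivation chase termination. -/
def CTall (X : ChaseVariant) (Rset : Finset Rule) : Prop :=
  ∀ I : Finset Atom, ∀ D : Deriv Rset (I : Set Atom), D.IsX X → D.Fair X → D.Finite

/-- All-instance, some-derivation chase termination. -/
def CTex (X : ChaseVariant) (Rset : Finset Rule) : Prop :=
  ∀ I : Finset Atom, ∃ D : Deriv Rset (I : Set Atom), D.IsX X ∧ D.Fair X ∧ D.Finite

inductive CTQuant : Type
  | all | ex

def CT (X : ChaseVariant) : CTQuant → Finset Rule → Prop
  | .all => CTall X
  | .ex => CTex X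

/-- The result of some fair `X`-derivation from `⟨Rset, J⟩`. -/
def ChX (X : ChaseVariant) (Rset : Finset Rule) (J : Set Atom) : Set Atom :=
  if h : ∃ D : Deriv Rset J, D.IsX X ∧ D.Fair X then h.choose.res else J

/-! ### Gaifman graph, treewidth, bts -/

def gaifmanAdj (J : Set Atom) (u v : FTerm) : Prop :=
  u ≠ v ∧ ∃ a ∈ J, u ∈ a.2 ∧ v ∈ a.2

/-- The (Gaifman graph of the) atom set `J` has treewidth at most `k`:
there is a tree decomposition all of whose bags have size at most `k + 1`. -/
def TreewidthAtMost (J : Set Atom) (k : ℕ) : Prop :=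
  ∃ (ι : Type) (T : SimpleGraph ι) (bag : ι → Finset FTerm),
    T.Connected ∧ T.IsAcyclic ∧
    (∀ v ∈ adom J, ∃ i, v ∈ bag i) ∧
    (∀ u v : FTerm, gaifmanAdj J u v → ∃ i, u ∈ bag i ∧ v ∈ bag i) ∧
    (∀ v : FTerm, (SimpleGraph.induce {i | v ∈ bag i} T).Preconnected) ∧
    (∀ i, (bag i).card ≤ k + 1)

/-- Bounded-treewidth sets: for every instance, some universal model of bounded treewidth. -/
def IsBts (Rset : Finset Rule) : Prop :=
  ∀ I : Finset Atom, ∃ (k : ℕ) (U : Set Atom),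
    IsUniversalModel Rset (I : Set Atom) U ∧ TreewidthAtMost U k

/-! ### Three-counter machines -/

/-- A three-counter machine: states `0, …, m − 1` (state `0` is initial, standing for `q₁`),
and a partial transition function given by a finite table. -/
structure TCM where
  m : ℕ
  hm : 0 < m
  δ : List ((ℕ × Bool × Bool) × (ℕ × Int × Int))
  keys_nodup : (δ.map Prod.fst).Nodup
  wf : ∀ e ∈ δ, e.1.1 < m ∧ e.2.1 < m ∧ e.2.2.1.natAbs ≤ 1 ∧ e.2.2.2.natAbs ≤ 1

/-- A configuration: state, two counters, and the time counter. -/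
abbrev Config : Type := ℕ × ℕ × ℕ × ℕ

def TCM.step (M : TCM) (q : ℕ) (b1 b2 : Bool) : Option (ℕ × Int × Int) :=
  (M.δ.find? fun e => decide (e.1 = (q, b1, b2))).map Prod.snd

def TCM.next (M : TCM) (C : Config) : Option Config :=
  match M.step C.1 (decide (C.2.1 ≠ 0)) (decide (C.2.2.1 ≠ 0)) with
  | none => none
  | some (q', d1, d2) =>
      some (q', ((C.2.1 : ℤ) + d1).toNat, ((C.2.2.1 : ℤ) + d2).toNat, C.2.2.2 + 1)

def TCM.run (M : TCM) : ℕ → Option Config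
  | 0 => some (0, 0, 0, 0)
  | n + 1 => (M.run n).bind M.next

/-- The machine halts: some reachable configuration has no successor. -/
def TCM.Halts (M : TCM) : Prop := ∃ n C, M.run n = some C ∧ M.next C = none

/-! ### Prime encoding of configurations -/

/-- The least prime strictly greater than `n` (computably). -/
def nextPrime (n : ℕ) : ℕ := Nat.find (Nat.exists_infinite_primes (n + 1))

/-- `prm i` is the `(i+1)`-st prime `p_{i+1}`, i.e. `prm 0 = 2`. -/
def prm : ℕ → ℕ
  | 0 => 2
  | k + 1 => nextPrime (prm k)

/-- Encoding of a configuration as a natural number. -/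
def TCM.enc (M : TCM) (C : Config) : ℕ :=
  prm C.1 * prm M.m ^ C.2.1 * prm (M.m + 1) ^ C.2.2.1 * prm (M.m + 2) ^ C.2.2.2

/-- `p = p₁ ⋯ p_{m+3}`. -/
def TCM.p (M : TCM) : ℕ := ∏ i ∈ Finset.range (M.m + 3), prm i

/-- Decode the state from a residue modulo `M.p`. -/
def TCM.stateOf (M : TCM) (i : ℕ) : Option ℕ :=
  (List.range M.m).find? fun s => decide (prm s ∣ i)

/-- The canonical pair `(q_i, r_i)` realizing the prime encoding of the transitions. -/
def TCM.qr (M : TCM) (i : ℕ) : ℕ × ℕ :=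
  match M.stateOf i with
  | none => (1, 1)
  | some s =>
      let b1 : Bool := decide (prm M.m ∣ i)
      let b2 : Bool := decide (prm (M.m + 1) ∣ i)
      match M.step s b1 b2 with
      | none => (1, 1)
      | some (s', d1, d2) =>
          let e1 : ℤ := if b1 then d1 else max d1 0
          let e2 : ℤ := if b2 then d2 else max d2 0
          let num : ℕ := prm s' * prm (M.m + 2) *
            (if e1 = 1 then prm M.m else 1) * (if e2 = 1 then prm (M.m + 1) else 1)
          let den : ℕ := prm s *
            (if e1 = -1 then prm M.m else 1) * (if e2 = -1 then prm (M.m + 1) else 1)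
          (num / Nat.gcd num den, den / Nat.gcd num den)

def TCM.qi (M : TCM) (i : ℕ) : ℕ := (M.qr i).1
def TCM.ri (M : TCM) (i : ℕ) : ℕ := (M.qr i).2

/-- `g(n) = q_{n mod p} · n / r_{n mod p}`. -/
def TCM.g (M : TCM) (n : ℕ) : ℕ := M.qi (n % M.p) * n / M.ri (n % M.p)

/-- `gᵏ(2)`. -/
def TCM.gIter (M : TCM) (k : ℕ) : ℕ := (M.g)^[k] 2

/-- `G = {gᵏ(2) : k ∈ ℕ}`. -/
def TCM.Gset (M : TCM) : Set ℕ := Set.range M.gIter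

/-! ### The rule set `R_M` -/

def pEnd : ℕ := 0
def pFlood : ℕ := 1
def pS0 : ℕ := 2
def pS : ℕ := 3
def pG : ℕ := 4
def pR (i : ℕ) : ℕ := 5 + 2 * i
def pT (i : ℕ) : ℕ := 6 + 2 * i

/-- `j`-th vertex of an `S`-path of length `n` from variable `a` to variable `b`
with fresh intermediate variables `base + 1, …, base + n − 1`. -/
def pathVar (a b base n j : ℕ) : FTerm :=
  if j = 0 then vt a else if j = n then vt b else vt (base + j)

/-- The atoms of `Sⁿ(x_a, x_b)`: an `S`-path of length `n`. -/
def spath (a b base n : ℕ) : Finset Atom :=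
  (Finset.range n).image fun j =>
    (pS, [pathVar a b base n j, pathVar a b base n (j + 1)])

/-- Rule (1): `S₀(x,y) → S(x,y)`. -/
def ruleS : Rule := ({(pS0, [vt 0, vt 1])}, {(pS, [vt 0, vt 1])})

/-- Rule (2): `R_i(x,y) ∧ S(y,z) → R_{i+1}(x,z)` (indices modulo `p`). -/
def ruleR (M : TCM) (i : ℕ) : Rule :=
  ({(pR i, [vt 0, vt 1]), (pS, [vt 1, vt 2])}, {(pR ((i + 1) % M.p), [vt 0, vt 2])})

/-- Rule (3): `T_i(x,y,z) ∧ S^{r_i}(y,y′) ∧ S^{q_i}(z,z′) → T_i(x,y′,z′)`. -/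
def ruleT (M : TCM) (i : ℕ) : Rule :=
  (({(pT i, [vt 0, vt 1, vt 2])} : Finset Atom) ∪ spath 1 3 10 (M.ri i) ∪
      spath 2 4 (11 + M.ri i) (M.qi i),
    {(pT i, [vt 0, vt 3, vt 4])})

/-- Rule (4): `S(x,y) → Flood(y)`. -/
def ruleFloodProp : Rule := ({(pS, [vt 0, vt 1])}, {(pFlood, [vt 1])})

/-- Rule (5): `End(x) → S(x,x)`. -/
def ruleSEnd : Rule := ({(pEnd, [vt 0])}, {(pS, [vt 0, vt 0])})

/-- Rule (6): `S²(x,y) → G(x,y)`. -/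
def ruleGInit : Rule := (spath 0 1 10 2, {(pG, [vt 0, vt 1])})

/-- Rule (7): `G(x,y) ∧ R_i(x,y) ∧ T_i(x,y,z) → G(x,z)`. -/
def ruleGStep (i : ℕ) : Rule :=
  ({(pG, [vt 0, vt 1]), (pR i, [vt 0, vt 1]), (pT i, [vt 0, vt 1, vt 2])},
    {(pG, [vt 0, vt 2])})

/-- Rule (8): `Flood(x) ∧ Flood(y) ∧ Flood(z) → G(x,y) ∧ ⋀_{j<p} (R_j(x,y) ∧ T_j(x,y,z))`. -/
def ruleFloodGen (M : TCM) : Rule :=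
  ({(pFlood, [vt 0]), (pFlood, [vt 1]), (pFlood, [vt 2])},
    ({(pG, [vt 0, vt 1])} : Finset Atom) ∪
      (Finset.range M.p).biUnion fun j =>
        {(pR j, [vt 0, vt 1]), (pT j, [vt 0, vt 1, vt 2])})

/-- Rule (9): `G(y,z) ∧ End(z) → ∃x (S₀(x,y) ∧ R₀(x,x) ∧ ⋀_{j<p} T_j(x,x,x))`. -/
def ruleEx (M : TCM) : Rule :=
  ({(pG, [vt 1, vt 2]), (pEnd, [vt 2])},
    ({(pS0, [vt 0, vt 1]), (pR 0, [vt 0, vt 0])} : Finset Atom) ∪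
      (Finset.range M.p).biUnion fun j => {(pT j, [vt 0, vt 0, vt 0])})

/-- The rule set `R_M`. -/
def RM (M : TCM) : Finset Rule :=
  ({ruleS, ruleFloodProp, ruleSEnd, ruleGInit, ruleFloodGen M, ruleEx M} : Finset Rule) ∪
    (Finset.range M.p).biUnion fun i => {ruleR M i, ruleT M i, ruleGStep i}

/-- The alternating Datalog/non-Datalog chase steps `Step^X_n`. -/
def StepX (X : ChaseVariant) (M : TCM) : ℕ → Set Atom → Set Atom
  | 0, I => ChX X (DatRules (RM M)) I
  | n + 1, I => ChX X (DatRules (RM M)) (ChX X (NDatRules (RM M)) (StepX X M n I))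

/-- The constant `w`, the "well of positivity". -/
def wC : FTerm := ct 0

/-- The instance `{End(w)}`. -/
def IE : Set Atom := {(pEnd, [wC])}

/-- Membership in the signature of `R_M` (predicate together with its arity). -/
def InSig (M : TCM) (a : Atom) : Prop :=
  ((a.1 = pEnd ∨ a.1 = pFlood) ∧ a.2.length = 1) ∨
  ((a.1 = pS0 ∨ a.1 = pS ∨ a.1 = pG ∨ ∃ i < M.p, a.1 = pR i) ∧ a.2.length = 2) ∨
  ((∃ i < M.p, a.1 = pT i) ∧ a.2.length = 3)

/-- The critical instance: all atoms `P(w, …, w)` over the signature of `R_M`. -/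
def Crit (M : TCM) : Set Atom := {a | InSig M a ∧ ∀ t ∈ a.2, t = wC}

/-- An `S`-path of length `k` from `s` to `t` in `J`. -/
def SPath (J : Set Atom) : ℕ → FTerm → FTerm → Prop
  | 0, s, t => s = t
  | k + 1, s, t => ∃ u, (pS, [s, u]) ∈ J ∧ SPath J k u t

/-- The restriction `J|_S`: atoms of `J` all of whose terms belong to `S`. -/
def restrictTo (J : Set Atom) (S : Set FTerm) : Set Atom := {a ∈ J | ∀ t ∈ a.2, t ∈ S}

/-- An explicit injective encoding of three-counter machines by natural numbers. -/
def encodeTCM (M : TCM) : ℕ := Encodable.encode (M.m, M.δ)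

/-!
On numbers that encode configurations, `g` acts as the successor function `next`, and it fixes
the encodings of halting configurations. Hence `gᵏ(2)` is the encoding of the `k`-th configuration
of the run. If `M` halts after `n` steps, the sequence is constant from `n` on and `G` is finite.
Otherwise the `k`-th configuration has time counter `k`, so `gᵏ(2) ≥ p_{m+3}ᵏ ≥ 2ᵏ` and `G` is
unbounded. For subsets of `ℕ`, bounded and finite mean the same thing.
-/

lemma nextPrime_spec (n : ℕ) : n + 1 ≤ nextPrime n ∧ (nextPrime n).Prime :=
  Nat.find_spec (Nat.exists_infinite_primes (n + 1))

lemma prm_prime : ∀ k, (prm k).Prime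
  | 0 => Nat.prime_two
  | k + 1 => (nextPrime_spec (prm k)).2

lemma prm_strictMono : StrictMono prm :=
  strictMono_nat_of_lt_succ fun n => (nextPrime_spec (prm n)).1

lemma prm_ne_zero (k : ℕ) : prm k ≠ 0 := (prm_prime k).ne_zero

lemma prm_dvd_prm_iff {s t : ℕ} : prm s ∣ prm t ↔ s = t :=
  (Nat.prime_dvd_prime_iff_eq (prm_prime s) (prm_prime t)).trans prm_strictMono.injective.eq_iff

lemma prm_dvd_pow_iff {s t e : ℕ} : prm s ∣ prm t ^ e ↔ s = t ∧ e ≠ 0 := by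
  rcases eq_or_ne e 0 with rfl | he
  · simp [(prm_prime s).ne_one]
  · simp [(prm_prime s).prime.dvd_pow_iff_dvd he, prm_dvd_prm_iff, he]

lemma List.find?_eq_some_of_unique {α : Type*} {P : α → Bool} {l : List α} {a : α}
    (ha : a ∈ l) (hP : ∀ x ∈ l, P x ↔ x = a) : l.find? P = some a := by
  obtain ⟨x, hx⟩ := Option.isSome_iff_exists.1
    (List.find?_isSome.2 ⟨a, ha, (hP a ha).2 rfl⟩)
  rw [hx, (hP x (List.mem_of_find?_eq_some hx)).1 (List.find?_some hx)]

-- The factor of `P` in `q_i / r_i` for a counter with value `v` and increment `d`; a decrement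
-- of a zero counter is void, hence the `max d 0`.
lemma mul_pow_counter_update (P v : ℕ) {d : ℤ} (hd : d.natAbs ≤ 1) :
    (if (if v ≠ 0 then d else max d 0) = 1 then P else 1) * P ^ v =
      (if (if v ≠ 0 then d else max d 0) = -1 then P else 1) * P ^ ((v : ℤ) + d).toNat := by
  obtain rfl | rfl | rfl : d = -1 ∨ d = 0 ∨ d = 1 := by omega
  all_goals
    rcases v with _ | w
    · simp
    · simp only [Nat.cast_succ, ne_eq, Nat.succ_ne_zero, not_false_eq_true, if_true]
      norm_num [show ((w : ℤ) + 1 + 1).toNat = w + 2 by omega, pow_succ, mul_comm]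

lemma Nat.div_gcd_mul_div_div_gcd_eq {a b x y : ℕ} (hb : 0 < b) (h : a * x = b * y) :
    a / a.gcd b * x / (b / a.gcd b) = y := by
  obtain ⟨a', ha⟩ := Nat.gcd_dvd_left a b
  obtain ⟨b', hb'⟩ := Nat.gcd_dvd_right a b
  have hd : 0 < a.gcd b := Nat.gcd_pos_of_pos_right a hb
  have hb'pos : 0 < b' := Nat.pos_of_mul_pos_left (hb'.symm ▸ hb)
  rw [Nat.div_eq_of_eq_mul_right hd ha, Nat.div_eq_of_eq_mul_right hd hb']
  have h' : a.gcd b * (a' * x) = a.gcd b * (b' * y) := by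
    rw [← mul_assoc, ← mul_assoc, ← ha, ← hb', h]
  rw [Nat.eq_of_mul_eq_mul_left hd h', Nat.mul_div_cancel_left _ hb'pos]

namespace TCM

variable (M : TCM)

lemma prm_dvd_enc_iff (C : Config) (s : ℕ) :
    prm s ∣ M.enc C ↔
      s = C.1 ∨ (s = M.m ∧ C.2.1 ≠ 0) ∨ (s = M.m + 1 ∧ C.2.2.1 ≠ 0) ∨
        (s = M.m + 2 ∧ C.2.2.2 ≠ 0) := by
  simp only [TCM.enc, (prm_prime s).dvd_mul, prm_dvd_prm_iff, prm_dvd_pow_iff, or_assoc]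

lemma prm_dvd_mod_p_iff {s : ℕ} (hs : s < M.m + 3) (n : ℕ) : prm s ∣ n % M.p ↔ prm s ∣ n :=
  Nat.dvd_mod_iff (Finset.dvd_prod_of_mem _ (Finset.mem_range.2 hs))

variable {M} {C : Config}

lemma stateOf_enc_mod_p (hC : C.1 < M.m) : M.stateOf (M.enc C % M.p) = some C.1 := by
  refine List.find?_eq_some_of_unique (List.mem_range.2 hC) fun s hs => ?_
  rw [List.mem_range] at hs
  rw [decide_eq_true_iff, prm_dvd_mod_p_iff M (by omega), prm_dvd_enc_iff]
  omega

lemma prm_m_dvd_enc_mod_p_iff (hC : C.1 < M.m) : prm M.m ∣ M.enc C % M.p ↔ C.2.1 ≠ 0 := by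
  rw [prm_dvd_mod_p_iff M (by omega), prm_dvd_enc_iff]
  omega

lemma prm_m_add_one_dvd_enc_mod_p_iff (hC : C.1 < M.m) :
    prm (M.m + 1) ∣ M.enc C % M.p ↔ C.2.2.1 ≠ 0 := by
  rw [prm_dvd_mod_p_iff M (by omega), prm_dvd_enc_iff]
  omega

lemma step_wf {q : ℕ} {b₁ b₂ : Bool} {s : ℕ} {d₁ d₂ : ℤ}
    (h : M.step q b₁ b₂ = some (s, d₁, d₂)) : s < M.m ∧ d₁.natAbs ≤ 1 ∧ d₂.natAbs ≤ 1 := by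
  obtain ⟨e, he, hes⟩ := Option.map_eq_some_iff.1 h
  simpa [hes] using (M.wf e (List.mem_of_find?_eq_some he)).2

lemma next_eq_some {C' : Config} (h : M.next C = some C') :
    ∃ s d₁ d₂, M.step C.1 (decide (C.2.1 ≠ 0)) (decide (C.2.2.1 ≠ 0)) = some (s, d₁, d₂) ∧
      C' = (s, ((C.2.1 : ℤ) + d₁).toNat, ((C.2.2.1 : ℤ) + d₂).toNat, C.2.2.2 + 1) := by
  unfold TCM.next at h
  rcases hs : M.step C.1 (decide (C.2.1 ≠ 0)) (decide (C.2.2.1 ≠ 0)) with _ | ⟨s, d₁, d₂⟩ <;>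
    rw [hs] at h
  · exact absurd h nofun
  · exact ⟨s, d₁, d₂, rfl, (Option.some.inj h).symm⟩


lemma g_enc_of_next_eq_none (hC : C.1 < M.m) (h : M.next C = none) : M.g (M.enc C) = M.enc C := by
  have hs : M.step C.1 (decide (C.2.1 ≠ 0)) (decide (C.2.2.1 ≠ 0)) = none := by
    unfold TCM.next at h
    rcases hs : M.step C.1 (decide (C.2.1 ≠ 0)) (decide (C.2.2.1 ≠ 0)) with _ | ⟨s, d₁, d₂⟩
    · rfl
    · rw [hs] at h; exact absurd h nofun
  simp only [TCM.g, TCM.qi, TCM.ri, TCM.qr, stateOf_enc_mod_p hC, prm_m_dvd_enc_mod_p_iff hC,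
    prm_m_add_one_dvd_enc_mod_p_iff hC, hs, one_mul, Nat.div_one]

lemma g_enc_of_next_eq_some {C' : Config} (hC : C.1 < M.m) (h : M.next C = some C') :
    M.g (M.enc C) = M.enc C' := by
  obtain ⟨s, d₁, d₂, hs, rfl⟩ := next_eq_some h
  obtain ⟨-, hd₁, hd₂⟩ := step_wf hs
  simp only [TCM.g, TCM.qi, TCM.ri, TCM.qr, stateOf_enc_mod_p hC, prm_m_dvd_enc_mod_p_iff hC,
    prm_m_add_one_dvd_enc_mod_p_iff hC, hs, decide_eq_true_eq]
  refine Nat.div_gcd_mul_div_div_gcd_eq (by split_ifs <;> simp [Nat.pos_iff_ne_zero, prm_ne_zero]) ?_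
  have key := congrArg (prm s * prm C.1 * prm (M.m + 2) ^ (C.2.2.2 + 1) * ·)
    (congrArg₂ (· * ·) (mul_pow_counter_update (prm M.m) C.2.1 hd₁)
      (mul_pow_counter_update (prm (M.m + 1)) C.2.2.1 hd₂))
  simp only [TCM.enc]
  convert key using 1 <;> ring

lemma run_spec : ∀ {k : ℕ} {C : Config}, M.run k = some C →
    C.1 < M.m ∧ C.2.2.2 = k ∧ M.gIter k = M.enc C
  | 0, C, h => by
    obtain rfl := (Option.some.inj h).symm
    exact ⟨M.hm, rfl, rfl⟩
  | k + 1, C, h => by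
    rcases hr : M.run k with _ | C₀
    · simp [TCM.run, hr] at h
    · rw [TCM.run, hr, Option.bind_some] at h
      obtain ⟨hC₀, ht, hg⟩ := run_spec hr
      obtain ⟨s, d₁, d₂, hs, rfl⟩ := next_eq_some h
      refine ⟨(step_wf hs).1, by rw [ht], ?_⟩
      rw [TCM.gIter, Function.iterate_succ_apply', ← TCM.gIter, hg, g_enc_of_next_eq_some hC₀ h]

lemma gset_finite_of_halts (h : M.Halts) : M.Gset.Finite := by
  obtain ⟨n, C, hrun, hnext⟩ := h
  obtain ⟨hC, -, hn⟩ := run_spec hrun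
  have hfix (j : ℕ) : M.gIter (j + n) = M.enc C := by
    rw [TCM.gIter, Function.iterate_add_apply, ← TCM.gIter, hn,
      Function.iterate_fixed (g_enc_of_next_eq_none hC hnext)]
  refine ((Set.finite_Iic n).image M.gIter).subset ?_
  rintro _ ⟨k, rfl⟩
  rcases le_or_gt k n with hk | hk
  · exact ⟨k, hk, rfl⟩
  · exact ⟨n, Set.mem_Iic.2 le_rfl, by rw [hn, ← hfix (k - n), Nat.sub_add_cancel hk.le]⟩

lemma run_isSome_of_not_halts (h : ¬ M.Halts) : ∀ k, ∃ C, M.run k = some C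
  | 0 => ⟨_, rfl⟩
  | k + 1 => by
    obtain ⟨C, hC⟩ := run_isSome_of_not_halts h k
    rcases hn : M.next C with _ | C'
    · exact absurd ⟨k, C, hC, hn⟩ h
    · exact ⟨C', by rw [TCM.run, hC, Option.bind_some, hn]⟩

lemma pow_time_le_enc (C : Config) : prm (M.m + 2) ^ C.2.2.2 ≤ M.enc C :=
  Nat.le_mul_of_pos_left _ (Nat.pos_of_ne_zero (by simp [prm_ne_zero]))

lemma not_bddAbove_gset_of_not_halts (h : ¬ M.Halts) : ¬ BddAbove M.Gset := by
  rintro ⟨B, hB⟩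
  obtain ⟨C, hC⟩ := run_isSome_of_not_halts h B
  obtain ⟨-, ht, hg⟩ := run_spec hC
  have : B < M.gIter B := calc
    B < 2 ^ B := Nat.lt_two_pow_self
    _ ≤ prm (M.m + 2) ^ B := Nat.pow_le_pow_left (prm_prime _).two_le _
    _ ≤ M.enc C := ht ▸ pow_time_le_enc C
    _ = M.gIter B := hg.symm
  exact (hB ⟨B, rfl⟩).not_gt this

lemma halts_iff_gset_finite : M.Halts ↔ M.Gset.Finite :=
  ⟨gset_finite_of_halts, fun h => by_contra fun hn => not_bddAbove_gset_of_not_halts hn h.bddAbove⟩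

end TCM

/-- a 3CM halts iff `G = {gᵏ(2) : k ∈ ℕ}` is bounded (equivalently, finite). -/
theorem stmt_1 (M : TCM) :
    (M.Halts ↔ ∃ B, ∀ x ∈ M.Gset, x ≤ B) ∧ (M.Halts ↔ M.Gset.Finite) := by
  rw [← bddAbove_def, ← Set.finite_iff_bddAbove]
  exact ⟨TCM.halts_iff_gset_finite, TCM.halts_iff_gset_finite⟩

end
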